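/- arXiv:2405.03854 — 3 statements merged into one kernel-verified Lean document; each statement's English description precedes it below -/
import Mathlib

section
/- Let D : ℂ^N → ℂ^N be Lipschitz continuous with constant 1 + ε for some ε > 0, let A ∈ ℂ^{M×N}, P ∈ ℂ^{N×N}, and α > 0. Define T(x) = D(x − αP·Aᴴ(Ax − y)) for a fixed y ∈ ℂ^M. If x* is a fixed point of T and (1+ε)·‖I − αP AᴴA‖₂ < 1, then the iterates x_{k+1} = T(x_k) converge to x* with ‖x_{k+1} − x*‖ ≤ (1+ε)‖I − αP AᴴA‖₂ · ‖x_k − x*‖. -/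
/-!
The gradient step `x ↦ x - α P Aᴴ (A x - y)` is affine with linear part `I - α P Aᴴ A`, so
`T = D ∘ (gradient step)` moves any point towards the fixed point `x*` by at least the factor
`(1 + ε) ‖I - α P Aᴴ A‖₂ < 1`; iterating gives a geometric bound on `‖x_k - x*‖`.
-/

open Filter Topology Matrix

theorem tendsto_of_norm_sub_le_mul {E : Type*} [SeminormedAddCommGroup E] {x : ℕ → E} {a : E}
    {c : ℝ} (hc₀ : 0 ≤ c) (hc₁ : c < 1) (h : ∀ k, ‖x (k + 1) - a‖ ≤ c * ‖x k - a‖) :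
    Tendsto x atTop (𝓝 a) := by
  rw [tendsto_iff_norm_sub_tendsto_zero]
  have hgeom (k : ℕ) : ‖x k - a‖ ≤ c ^ k * ‖x 0 - a‖ :=
    le_geom (u := fun k => ‖x k - a‖) hc₀ k fun j _ => h j
  refine squeeze_zero (fun k => norm_nonneg _) hgeom ?_
  simpa using (tendsto_pow_atTop_nhds_zero_of_lt_one hc₀ hc₁).mul_const ‖x 0 - a‖

theorem norm_comp_sub_comp_le_of_affine {𝕜 E F : Type*} [NontriviallyNormedField 𝕜]
    [SeminormedAddCommGroup E] [SeminormedAddCommGroup F] [NormedSpace 𝕜 E] [NormedSpace 𝕜 F]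
    {D : F → F} {K : ℝ} (hK : 0 ≤ K) (hD : ∀ u v, ‖D u - D v‖ ≤ K * ‖u - v‖) {G : E → F}
    (L : E →L[𝕜] F) (hG : ∀ u v, G u - G v = L (u - v)) (u v : E) :
    ‖D (G u) - D (G v)‖ ≤ K * ‖L‖ * ‖u - v‖ :=
  calc ‖D (G u) - D (G v)‖ ≤ K * ‖L (u - v)‖ := hG u v ▸ hD _ _
    _ ≤ K * (‖L‖ * ‖u - v‖) := by gcongr; exact L.le_opNorm _
    _ = K * ‖L‖ * ‖u - v‖ := (mul_assoc _ _ _).symm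

section GradientStep

variable {𝕜 : Type*} [RCLike 𝕜] {m n : Type*} [Fintype m] [Fintype n] [DecidableEq m]
  [DecidableEq n]

/-- The step `x - a P ∇f(x)` for `f(x) = ½ ‖A x - y‖²`. -/
def preconditionedGradientStep (A : Matrix m n 𝕜) (P : Matrix n n 𝕜) (a : 𝕜)
    (y : EuclideanSpace 𝕜 m) (x : EuclideanSpace 𝕜 n) : EuclideanSpace 𝕜 n :=
  x - a • toEuclideanLin P (toEuclideanLin Aᴴ (toEuclideanLin A x - y))

theorem preconditionedGradientStep_sub (A : Matrix m n 𝕜) (P : Matrix n n 𝕜) (a : 𝕜)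
    (y : EuclideanSpace 𝕜 m) (u v : EuclideanSpace 𝕜 n) :
    preconditionedGradientStep A P a y u - preconditionedGradientStep A P a y v =
      toEuclideanCLM (n := n) (𝕜 := 𝕜) (1 - a • (P * (Aᴴ * A))) (u - v) := by
  ext i
  simp [preconditionedGradientStep, ofLp_toEuclideanCLM, mulVec_mulVec]
  ring

end GradientStep

open Matrix in
theorem stmt_1_general (M N : ℕ) (D : EuclideanSpace ℂ (Fin N) → EuclideanSpace ℂ (Fin N))
    (ε : ℝ) (hε : 0 < ε)
    (hD : ∀ x y, ‖D x - D y‖ ≤ (1 + ε) * ‖x - y‖)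
    (A : Matrix (Fin M) (Fin N) ℂ) (P : Matrix (Fin N) (Fin N) ℂ)
    (α : ℝ) (y : EuclideanSpace ℂ (Fin M))
    (T : EuclideanSpace ℂ (Fin N) → EuclideanSpace ℂ (Fin N))
    (hT : ∀ x, T x = D (x - (α : ℂ) •
      Matrix.toEuclideanLin P (Matrix.toEuclideanLin Aᴴ (Matrix.toEuclideanLin A x - y))))
    (hcontr : (1 + ε) * ‖(Matrix.toEuclideanCLM (𝕜 := ℂ) (1 - (α : ℂ) • (P * (Aᴴ * A))) : EuclideanSpace ℂ (Fin N) →L[ℂ] EuclideanSpace ℂ (Fin N))‖ < 1)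
    (xs : EuclideanSpace ℂ (Fin N)) (hfix : T xs = xs)
    (x : ℕ → EuclideanSpace ℂ (Fin N)) (hx : ∀ k, x (k + 1) = T (x k)) :
    (∀ k, ‖x (k + 1) - xs‖ ≤
        (1 + ε) * ‖(Matrix.toEuclideanCLM (𝕜 := ℂ) (1 - (α : ℂ) • (P * (Aᴴ * A))) : EuclideanSpace ℂ (Fin N) →L[ℂ] EuclideanSpace ℂ (Fin N))‖ *
          ‖x k - xs‖) ∧
      Filter.Tendsto x Filter.atTop (nhds xs) := by
  have hstep (z : EuclideanSpace ℂ (Fin N)) : ‖T z - xs‖ ≤ (1 + ε) *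
      ‖(toEuclideanCLM (𝕜 := ℂ) (1 - (α : ℂ) • (P * (Aᴴ * A))) :
        EuclideanSpace ℂ (Fin N) →L[ℂ] EuclideanSpace ℂ (Fin N))‖ * ‖z - xs‖ := by
    have := norm_comp_sub_comp_le_of_affine (by linarith) hD _
      (preconditionedGradientStep_sub A P α y) z xs
    rwa [preconditionedGradientStep, preconditionedGradientStep, ← hT, ← hT, hfix] at this
  have hrate (k : ℕ) := hx k ▸ hstep (x k)
  exact ⟨hrate, tendsto_of_norm_sub_le_mul (by positivity) hcontr hrate⟩

open Matrix in
theorem stmt_1 (M N : ℕ) (D : EuclideanSpace ℂ (Fin N) → EuclideanSpace ℂ (Fin N))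
    (ε : ℝ) (hε : 0 < ε)
    (hD : ∀ x y, ‖D x - D y‖ ≤ (1 + ε) * ‖x - y‖)
    (A : Matrix (Fin M) (Fin N) ℂ) (P : Matrix (Fin N) (Fin N) ℂ)
    (α : ℝ) (hα : 0 < α) (y : EuclideanSpace ℂ (Fin M))
    (T : EuclideanSpace ℂ (Fin N) → EuclideanSpace ℂ (Fin N))
    (hT : ∀ x, T x = D (x - (α : ℂ) •
      Matrix.toEuclideanLin P (Matrix.toEuclideanLin Aᴴ (Matrix.toEuclideanLin A x - y))))
    (hcontr : (1 + ε) * ‖(Matrix.toEuclideanCLM (𝕜 := ℂ) (1 - (α : ℂ) • (P * (Aᴴ * A))) : EuclideanSpace ℂ (Fin N) →L[ℂ] EuclideanSpace ℂ (Fin N))‖ < 1)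
    (xs : EuclideanSpace ℂ (Fin N)) (hfix : T xs = xs)
    (x : ℕ → EuclideanSpace ℂ (Fin N)) (hx : ∀ k, x (k + 1) = T (x k)) :
    (∀ k, ‖x (k + 1) - xs‖ ≤
        (1 + ε) * ‖(Matrix.toEuclideanCLM (𝕜 := ℂ) (1 - (α : ℂ) • (P * (Aᴴ * A))) : EuclideanSpace ℂ (Fin N) →L[ℂ] EuclideanSpace ℂ (Fin N))‖ *
          ‖x k - xs‖) ∧
      Filter.Tendsto x Filter.atTop (nhds xs) :=
  stmt_1_general M N D ε hε hD A P α y T hT hcontr xs hfix x hx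
end

section
/- Let s, v ∈ ℂ^N satisfy θ₁ ≤ ⟨s,v⟩/⟨s,s⟩ and ⟨v,v⟩/⟨s,v⟩ ≤ θ₂ with 0 < θ₁ < 1 < θ₂ and ⟨s,v⟩ real and positive. Then τ = ⟨s,s⟩/⟨s,v⟩ − sqrt((⟨s,s⟩/⟨s,v⟩)² − ⟨s,s⟩/⟨v,v⟩) satisfies 1/(2θ₂) < τ ≤ 1/θ₁. -/
/-!
With `A = ‖s‖² / ⟨s,v⟩` and `B = ‖s‖² / ‖v‖²`, Cauchy–Schwarz gives `B ≤ A²`, so `τ = A - √(A² - B)`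
is the smaller real root of `t² - 2 A t + B`. Clearly `τ ≤ A ≤ 1/θ₁`. Rationalising,
`τ = B / (A + √(A² - B)) > B / (2A)`, and `B / A = ⟨s,v⟩ / ‖v‖² ≥ 1/θ₂`.
-/

lemma le_norm_mul_norm_of_inner_eq_ofReal {𝕜 E : Type*} [RCLike 𝕜] [NormedAddCommGroup E]
    [InnerProductSpace 𝕜 E] {s v : E} {σ : ℝ} (h : inner 𝕜 s v = (σ : 𝕜)) :
    σ ≤ ‖s‖ * ‖v‖ :=
  calc σ ≤ |σ| := le_abs_self σ
    _ = ‖inner 𝕜 s v‖ := by rw [h, RCLike.norm_ofReal]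
    _ ≤ ‖s‖ * ‖v‖ := norm_inner_le_norm s v

lemma div_two_mul_lt_sub_sqrt_sq_sub {A B : ℝ} (hA : 0 < A) (hB : 0 < B) (hBA : B ≤ A ^ 2) :
    B / (2 * A) < A - √(A ^ 2 - B) := by
  have hr2 : √(A ^ 2 - B) ^ 2 = A ^ 2 - B := Real.sq_sqrt (sub_nonneg.mpr hBA)
  have hrA : √(A ^ 2 - B) < A := (Real.sqrt_lt' hA).mpr (by linarith)
  rw [div_lt_iff₀ (by positivity)]
  -- with `r = √(A² - B)`: `B = (A - r) (A + r) < (A - r) (2 A)`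
  nlinarith [mul_lt_mul_of_pos_left (show A + √(A ^ 2 - B) < 2 * A by linarith)
    (sub_pos.mpr hrA)]

theorem stmt_5_general (N : ℕ) (s v : EuclideanSpace ℂ (Fin N))
    (θ₁ θ₂ : ℝ) (hθ₁ : 0 < θ₁)
    (sv : ℝ) (hsv : (inner ℂ s v : ℂ) = (sv : ℂ)) (hsvpos : 0 < sv)
    (h1 : θ₁ ≤ sv / ‖s‖ ^ 2) (h2 : ‖v‖ ^ 2 / sv ≤ θ₂)
    (τ : ℝ)
    (hτ : τ = ‖s‖ ^ 2 / sv - Real.sqrt ((‖s‖ ^ 2 / sv) ^ 2 - ‖s‖ ^ 2 / ‖v‖ ^ 2)) :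
    1 / (2 * θ₂) < τ ∧ τ ≤ 1 / θ₁ := by
  have hcs := le_norm_mul_norm_of_inner_eq_ofReal hsv
  have hsv_norm : 0 < ‖s‖ * ‖v‖ := hsvpos.trans_le hcs
  have hs : 0 < ‖s‖ := pos_of_mul_pos_left hsv_norm (norm_nonneg v)
  have hv : 0 < ‖v‖ := pos_of_mul_pos_right hsv_norm (norm_nonneg s)
  set A := ‖s‖ ^ 2 / sv
  set B := ‖s‖ ^ 2 / ‖v‖ ^ 2
  have hA : 0 < A := by positivity
  have hB : 0 < B := by positivity
  have hBA : B ≤ A ^ 2 := by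
    rw [div_pow, div_le_div_iff₀ (by positivity) (by positivity)]
    nlinarith [mul_le_mul_of_nonneg_left hcs (by positivity : 0 ≤ ‖s‖ ^ 2 * sv)]
  have hAB : A / B = ‖v‖ ^ 2 / sv := by simp only [A, B]; field_simp
  subst hτ
  constructor
  · calc 1 / (2 * θ₂) ≤ 1 / (2 * (A / B)) :=
          one_div_le_one_div_of_le (by positivity) (by rw [hAB]; linarith)
      _ = B / (2 * A) := by field_simp
      _ < _ := div_two_mul_lt_sub_sqrt_sq_sub hA hB hBA
  · calc _ ≤ A := sub_le_self _ (Real.sqrt_nonneg _)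
      _ = (sv / ‖s‖ ^ 2)⁻¹ := (inv_div _ _).symm
      _ ≤ 1 / θ₁ := by rw [one_div]; exact inv_anti₀ hθ₁ h1

theorem stmt_5 (N : ℕ) (s v : EuclideanSpace ℂ (Fin N)) (hs : s ≠ 0) (hv : v ≠ 0)
    (θ₁ θ₂ : ℝ) (hθ₁ : 0 < θ₁) (hθ₁1 : θ₁ < 1) (hθ₂ : 1 < θ₂)
    (sv : ℝ) (hsv : (inner ℂ s v : ℂ) = (sv : ℂ)) (hsvpos : 0 < sv)
    (h1 : θ₁ ≤ sv / ‖s‖ ^ 2) (h2 : ‖v‖ ^ 2 / sv ≤ θ₂)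
    (τ : ℝ)
    (hτ : τ = ‖s‖ ^ 2 / sv - Real.sqrt ((‖s‖ ^ 2 / sv) ^ 2 - ‖s‖ ^ 2 / ‖v‖ ^ 2)) :
    1 / (2 * θ₂) < τ ∧ τ ≤ 1 / θ₁ :=
  stmt_5_general N s v θ₁ θ₂ hθ₁ sv hsv hsvpos h1 h2 τ hτ
end

section
/- Let T(x) = D(x − α∇f(x)) where f(x) = (1/2)‖Ax − y‖², D is (1+ε)-Lipschitz, and suppose (1+ε)·max{|1 − α λ_min|, |1 − α λ_max|} < 1 where λ_min, λ_max are the smallest and largest eigenvalues of AᴴA. Then T is a contraction on ℂ^N with contraction constant (1+ε)·max{|1 − αλ_min|, |1 − αλ_max|}, and hence admits a unique fixed point. -/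
/-!
The gradient step `x ↦ x - α Aᴴ(Ax - y)` is affine with linear part `I - α AᴴA`. Diagonalising the
Hermitian matrix `AᴴA` in an orthonormal eigenbasis, this linear part scales the `i`-th coordinate
by `1 - α λᵢ`; as `λ ↦ |1 - αλ|` is convex and `λᵢ ∈ [λ_min, λ_max]`, each factor is at most
`max |1 - αλ_min| |1 - αλ_max|` in absolute value. Composing with the `(1 + ε)`-Lipschitz map `D`
gives the contraction estimate, and Banach's fixed point theorem on the complete space `ℂ^N` gives
the unique fixed point.
-/

open Module

theorem abs_one_sub_mul_le_max {α a b μ : ℝ} (ha : a ≤ μ) (hb : μ ≤ b) :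
    |1 - α * μ| ≤ max |1 - α * a| |1 - α * b| := by
  rcases le_total 0 α with hα | hα
  · rw [max_comm]
    exact abs_le_max_abs_abs (by nlinarith) (by nlinarith)
  · exact abs_le_max_abs_abs (by nlinarith) (by nlinarith)

theorem existsUnique_fixed_of_norm_sub_le {E : Type*} [NormedAddCommGroup E] [CompleteSpace E]
    {f : E → E} {K : ℝ} (hK₀ : 0 ≤ K) (hK₁ : K < 1) (hf : ∀ x z, ‖f x - f z‖ ≤ K * ‖x - z‖) :
    ∃! x, f x = x := by
  lift K to NNReal using hK₀
  have hf' : ContractingWith K f := ⟨by exact_mod_cast hK₁, lipschitzWith_iff_norm_sub_le.mpr hf⟩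
  exact ⟨hf'.fixedPoint f, hf'.fixedPoint_isFixedPt, fun z hz => hf'.fixedPoint_unique hz⟩

section

variable {𝕜 E ι : Type*} [RCLike 𝕜] [NormedAddCommGroup E] [InnerProductSpace 𝕜 E] [Fintype ι]

theorem OrthonormalBasis.norm_le_mul_of_norm_repr_le (b : OrthonormalBasis ι 𝕜 E) {v w : E}
    {c : ℝ} (hc : 0 ≤ c) (h : ∀ i, ‖b.repr w i‖ ≤ c * ‖b.repr v i‖) : ‖w‖ ≤ c * ‖v‖ := by
  rw [← b.repr.norm_map w, ← b.repr.norm_map v, EuclideanSpace.norm_eq, EuclideanSpace.norm_eq,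
    ← Real.sqrt_sq hc, ← Real.sqrt_mul (sq_nonneg c), Finset.mul_sum]
  gcongr with i
  rw [← mul_pow]
  gcongr
  exact h i

theorem LinearMap.IsSymmetric.norm_sub_smul_apply_le [FiniteDimensional 𝕜 E] {T : E →ₗ[𝕜] E}
    {n : ℕ} (hT : T.IsSymmetric) (hn : finrank 𝕜 E = n) {α c : ℝ} (hc : 0 ≤ c)
    (hμ : ∀ i, |1 - α * hT.eigenvalues hn i| ≤ c) (v : E) :
    ‖v - (α : 𝕜) • T v‖ ≤ c * ‖v‖ := by
  refine (hT.eigenvectorBasis hn).norm_le_mul_of_norm_repr_le hc fun i => ?_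
  have hrepr : (hT.eigenvectorBasis hn).repr (v - (α : 𝕜) • T v) i =
      ((1 - α * hT.eigenvalues hn i : ℝ) : 𝕜) * (hT.eigenvectorBasis hn).repr v i := by
    simp only [map_sub, map_smul, algebraMap_smul, PiLp.sub_apply, PiLp.smul_apply,
      hT.eigenvectorBasis_apply_self_apply, RCLike.real_smul_eq_coe_mul,
      RCLike.algebraMap_eq_ofReal, map_one, map_mul]
    ring
  rw [hrepr, norm_mul, RCLike.norm_ofReal]
  exact mul_le_mul_of_nonneg_right (hμ i) (norm_nonneg _)

end

open Matrix in
theorem stmt_15_general (M N : ℕ) (D : EuclideanSpace ℂ (Fin N) → EuclideanSpace ℂ (Fin N))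
    (ε : ℝ) (hε : 0 < ε)
    (hD : ∀ x y, ‖D x - D y‖ ≤ (1 + ε) * ‖x - y‖)
    (A : Matrix (Fin M) (Fin N) ℂ) (y : EuclideanSpace ℂ (Fin M))
    (α : ℝ)
    (T : EuclideanSpace ℂ (Fin N) → EuclideanSpace ℂ (Fin N))
    (hT : ∀ x, T x = D (x - (α : ℂ) •
      Matrix.toEuclideanLin Aᴴ (Matrix.toEuclideanLin A x - y)))
    (lmin lmax : ℝ)
    (hbetween : ∀ μ ∈ spectrum ℂ (Aᴴ * A), lmin ≤ μ.re ∧ μ.re ≤ lmax)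
    (hcontr : (1 + ε) * max |1 - α * lmin| |1 - α * lmax| < 1) :
    (∀ x z, ‖T x - T z‖ ≤ (1 + ε) * max |1 - α * lmin| |1 - α * lmax| * ‖x - z‖) ∧
      (∃! xs, T xs = xs) := by
  set c := max |1 - α * lmin| |1 - α * lmax|
  have hc : 0 ≤ c := (abs_nonneg _).trans (le_max_left _ _)
  have hS : (toEuclideanLin (Aᴴ * A)).IsSymmetric :=
    isSymmetric_toEuclideanLin_iff.mpr (isHermitian_conjTranspose_mul_self A)
  have hstep (v) : ‖v - (α : ℂ) • toEuclideanLin (Aᴴ * A) v‖ ≤ c * ‖v‖ := by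
    refine hS.norm_sub_smul_apply_le finrank_euclideanSpace_fin hc (fun i => ?_) v
    have hspec := (hS.hasEigenvalue_eigenvalues finrank_euclideanSpace_fin i).mem_spectrum
    rw [spectrum_toLpLin] at hspec
    obtain ⟨hlo, hhi⟩ := hbetween _ hspec
    exact abs_one_sub_mul_le_max (by simpa using hlo) (by simpa using hhi)
  have hlip (x z) : ‖T x - T z‖ ≤ (1 + ε) * c * ‖x - z‖ := by
    have hdiff : (x - (α : ℂ) • toEuclideanLin Aᴴ (toEuclideanLin A x - y)) -
        (z - (α : ℂ) • toEuclideanLin Aᴴ (toEuclideanLin A z - y)) =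
        (x - z) - (α : ℂ) • toEuclideanLin (Aᴴ * A) (x - z) := by
      simp only [toLpLin_mul_same, LinearMap.comp_apply, map_sub, smul_sub]
      abel
    rw [hT, hT, mul_assoc]
    exact (hD _ _).trans (hdiff ▸ mul_le_mul_of_nonneg_left (hstep _) (by linarith))
  exact ⟨hlip, existsUnique_fixed_of_norm_sub_le (by positivity) hcontr hlip⟩

open Matrix in
theorem stmt_15 (M N : ℕ) (D : EuclideanSpace ℂ (Fin N) → EuclideanSpace ℂ (Fin N))
    (ε : ℝ) (hε : 0 < ε)
    (hD : ∀ x y, ‖D x - D y‖ ≤ (1 + ε) * ‖x - y‖)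
    (A : Matrix (Fin M) (Fin N) ℂ) (y : EuclideanSpace ℂ (Fin M))
    (α : ℝ) (hα : 0 < α)
    (T : EuclideanSpace ℂ (Fin N) → EuclideanSpace ℂ (Fin N))
    (hT : ∀ x, T x = D (x - (α : ℂ) •
      Matrix.toEuclideanLin Aᴴ (Matrix.toEuclideanLin A x - y)))
    (lmin lmax : ℝ)
    (hmin : (lmin : ℂ) ∈ spectrum ℂ (Aᴴ * A))
    (hmax : (lmax : ℂ) ∈ spectrum ℂ (Aᴴ * A))
    (hbetween : ∀ μ ∈ spectrum ℂ (Aᴴ * A), lmin ≤ μ.re ∧ μ.re ≤ lmax)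
    (hcontr : (1 + ε) * max |1 - α * lmin| |1 - α * lmax| < 1) :
    (∀ x z, ‖T x - T z‖ ≤ (1 + ε) * max |1 - α * lmin| |1 - α * lmax| * ‖x - z‖) ∧
      (∃! xs, T xs = xs) :=
  stmt_15_general M N D ε hε hD A y α T hT lmin lmax hbetween hcontr
end
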